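/- arXiv:1111.6451 — 3 statements merged into one kernel-verified Lean document; each statement's English description precedes it below -/
import Mathlib

section
/- For each dimension d ≥ 1 there exists a constant κ > 0 such that for every N ≥ 1 there is a twice continuously differentiable function φ : ℝ^d → ℝ with 1_{B_N(0)} ≤ φ ≤ 1_{B_{N+1}(0)} and |Δφ(x)| ≤ κ·√(φ(x)) for all x ∈ ℝ^d. -/
open Metric Set

noncomputable def laplacian (d : ℕ) (φ : EuclideanSpace ℝ (Fin d) → ℝ)
    (x : EuclideanSpace ℝ (Fin d)) : ℝ :=
  ∑ i : Fin d,
    iteratedFDeriv ℝ 2 φ x ![EuclideanSpace.single i 1, EuclideanSpace.single i 1]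

/-!
Take `φ x = b ((‖x‖² - N²) / (2N + 1))` with `b = P ∘ clamp₀₁` and
`P t = (1 - t)⁴ (1 + 4t + 10t²) = 1 - 20t³ + 45t⁴ - 36t⁵ + 10t⁶`. Since `P'` and `P''` vanish at `0`
and `1`, `b` is `C²` with `b' = P' ∘ clamp₀₁` and `b'' = P'' ∘ clamp₀₁`. The factor `(1 - t)⁴` gives
`√P ≥ (1 - t)²`, while `P'` and `P''` are `O((1 - t)²)`, so `|b'|, |b''| ≤ C √b`. For a radial
function, `Δ (g ∘ ‖·‖²) = 2d g'(‖x‖²) + 4‖x‖² g''(‖x‖²)`, and the scaling by `2N + 1` keeps both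
coefficients bounded on the support of `φ`.
-/

open Asymptotics Filter Topology

theorem HasFDerivAt.comp_lipschitzWith_of_eq_zero {E F G : Type*} [NormedAddCommGroup E]
    [NormedSpace ℝ E] [NormedAddCommGroup F] [NormedSpace ℝ F] [NormedAddCommGroup G]
    [NormedSpace ℝ G] {f : E → F} {c : G → E} {K : NNReal} {x : G}
    (hf : HasFDerivAt f (0 : E →L[ℝ] F) (c x)) (hc : LipschitzWith K c) :
    HasFDerivAt (f ∘ c) (0 : G →L[ℝ] F) x := by
  have hlin : (fun t => c t - c x) =O[𝓝 x] fun t => t - x :=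
    .of_bound K (Eventually.of_forall fun t => by simpa [dist_eq_norm] using hc.dist_le_mul t x)
  refine .of_isLittleO ?_
  simpa [Function.comp_def] using ((hasFDerivAt_iff_isLittleO.1 hf).comp_tendsto
    (hc.continuous.tendsto x)).trans_isBigO hlin

def unitClamp (s : ℝ) : ℝ := max 0 (min 1 s)

lemma unitClamp_mem_Icc (s : ℝ) : unitClamp s ∈ Icc 0 1 :=
  ⟨le_max_left _ _, max_le zero_le_one (min_le_left _ _)⟩

lemma lipschitzWith_unitClamp : LipschitzWith 1 unitClamp :=
  (LipschitzWith.id.const_min 1).const_max 0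

@[fun_prop]
lemma continuous_unitClamp : Continuous unitClamp := lipschitzWith_unitClamp.continuous

lemma unitClamp_of_nonpos {s : ℝ} (hs : s ≤ 0) : unitClamp s = 0 := by
  simp [unitClamp, hs]

lemma unitClamp_of_one_le {s : ℝ} (hs : 1 ≤ s) : unitClamp s = 1 := by
  simp [unitClamp, hs]

lemma unitClamp_eq_self {s : ℝ} (hs : s ∈ Icc 0 1) : unitClamp s = s := by
  simp [unitClamp, hs.1, hs.2]

theorem HasDerivAt.comp_unitClamp {f f' : ℝ → ℝ} (hf : ∀ t ∈ Icc 0 1, HasDerivAt f (f' t) t)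
    (h0 : f' 0 = 0) (h1 : f' 1 = 0) (s : ℝ) :
    HasDerivAt (fun s => f (unitClamp s)) (f' (unitClamp s)) s := by
  by_cases hs : f' (unitClamp s) = 0
  · rw [hs, hasDerivAt_iff_hasFDerivAt, ContinuousLinearMap.toSpanSingleton_zero]
    refine HasFDerivAt.comp_lipschitzWith_of_eq_zero ?_ lipschitzWith_unitClamp
    simpa [hs] using (hf _ (unitClamp_mem_Icc s)).hasFDerivAt
  · have hs' : s ∈ Ioo 0 1 := by
      refine ⟨lt_of_not_ge fun h => hs ?_, lt_of_not_ge fun h => hs ?_⟩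
      · rw [unitClamp_of_nonpos h, h0]
      · rw [unitClamp_of_one_le h, h1]
    have heq : unitClamp =ᶠ[𝓝 s] id :=
      mem_of_superset (isOpen_Ioo.mem_nhds hs') fun t ht =>
        unitClamp_eq_self (Ioo_subset_Icc_self ht)
    rw [unitClamp_eq_self (Ioo_subset_Icc_self hs')] at hs ⊢
    exact (hf s (Ioo_subset_Icc_self hs')).congr_of_eventuallyEq (heq.fun_comp f)

def bumpPoly (t : ℝ) : ℝ := (1 - t) ^ 4 * (1 + 4 * t + 10 * t ^ 2)

def bumpPolyDeriv (t : ℝ) : ℝ := -60 * t ^ 2 * (1 - t) ^ 3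

def bumpPolyDeriv2 (t : ℝ) : ℝ := 60 * t * (1 - t) ^ 2 * (5 * t - 2)

lemma hasDerivAt_bumpPoly (t : ℝ) : HasDerivAt bumpPoly (bumpPolyDeriv t) t := by
  have := (((hasDerivAt_id' t).const_sub 1).fun_pow 4).fun_mul
    ((((hasDerivAt_id' t).const_mul 4).const_add 1).fun_add ((hasDerivAt_pow 2 t).const_mul 10))
  exact this.congr_deriv (by simp only [bumpPolyDeriv]; push_cast; ring)

lemma hasDerivAt_bumpPolyDeriv (t : ℝ) : HasDerivAt bumpPolyDeriv (bumpPolyDeriv2 t) t := by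
  have := ((hasDerivAt_pow 2 t).const_mul (-60)).fun_mul
    (((hasDerivAt_id' t).const_sub 1).fun_pow 3)
  exact this.congr_deriv (by simp only [bumpPolyDeriv2]; push_cast; ring)

lemma bumpPoly_nonneg {t : ℝ} (ht : t ∈ Icc 0 1) : 0 ≤ bumpPoly t := by
  have := ht.1
  unfold bumpPoly; positivity

lemma bumpPoly_le_one {t : ℝ} (ht : t ∈ Icc 0 1) : bumpPoly t ≤ 1 := by
  have h : 0 ≤ t ^ 3 * (1 + (1 - t) * (10 * (t - 13 / 10) ^ 2 + 21 / 10)) :=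
    mul_nonneg (pow_nonneg ht.1 3) (by nlinarith [ht.2, sq_nonneg (t - 13 / 10)])
  unfold bumpPoly
  linarith

lemma sq_one_sub_le_sqrt_bumpPoly {t : ℝ} (ht : t ∈ Icc 0 1) : (1 - t) ^ 2 ≤ √(bumpPoly t) := by
  have := ht.1
  refine Real.le_sqrt_of_sq_le ?_
  unfold bumpPoly
  nlinarith [pow_nonneg (sub_nonneg.2 ht.2) 4, sq_nonneg t]

lemma abs_bumpPolyDeriv_le {t : ℝ} (ht : t ∈ Icc 0 1) :
    |bumpPolyDeriv t| ≤ 60 * √(bumpPoly t) := by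
  obtain ⟨h0, h1⟩ := ht
  have hb : |bumpPolyDeriv t| ≤ 60 * (1 - t) ^ 2 := by
    rw [bumpPolyDeriv, abs_le]
    constructor <;> nlinarith [mul_nonneg (mul_nonneg h0 h0) (sub_nonneg.2 h1), sq_nonneg (1 - t),
      mul_nonneg h0 (sub_nonneg.2 h1)]
  linarith [sq_one_sub_le_sqrt_bumpPoly ⟨h0, h1⟩]

lemma abs_bumpPolyDeriv2_le {t : ℝ} (ht : t ∈ Icc 0 1) :
    |bumpPolyDeriv2 t| ≤ 180 * √(bumpPoly t) := by
  obtain ⟨h0, h1⟩ := ht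
  have hb : |bumpPolyDeriv2 t| ≤ 180 * (1 - t) ^ 2 := by
    rw [bumpPolyDeriv2, abs_le]
    constructor <;> nlinarith [sq_nonneg (1 - t), mul_nonneg h0 (sub_nonneg.2 h1),
      mul_nonneg (sq_nonneg (1 - t)) (mul_nonneg h0 (sub_nonneg.2 h1))]
  linarith [sq_one_sub_le_sqrt_bumpPoly ⟨h0, h1⟩]

def bump (s : ℝ) : ℝ := bumpPoly (unitClamp s)

lemma hasDerivAt_bump (s : ℝ) : HasDerivAt bump (bumpPolyDeriv (unitClamp s)) s :=
  HasDerivAt.comp_unitClamp (fun t _ => hasDerivAt_bumpPoly t) (by simp [bumpPolyDeriv])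
    (by simp [bumpPolyDeriv]) s

lemma hasDerivAt_bumpPolyDeriv_comp_unitClamp (s : ℝ) :
    HasDerivAt (fun s => bumpPolyDeriv (unitClamp s)) (bumpPolyDeriv2 (unitClamp s)) s :=
  HasDerivAt.comp_unitClamp (fun t _ => hasDerivAt_bumpPolyDeriv t) (by simp [bumpPolyDeriv2])
    (by simp [bumpPolyDeriv2]) s

lemma contDiff_bump : ContDiff ℝ 2 bump := by
  have hd1 : deriv bump = fun s => bumpPolyDeriv (unitClamp s) :=
    funext fun s => (hasDerivAt_bump s).deriv
  have hd2 : deriv (fun s => bumpPolyDeriv (unitClamp s)) =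
      fun s => bumpPolyDeriv2 (unitClamp s) :=
    funext fun s => (hasDerivAt_bumpPolyDeriv_comp_unitClamp s).deriv
  rw [show (2 : WithTop ℕ∞) = 0 + 1 + 1 from rfl, contDiff_succ_iff_deriv, hd1,
    contDiff_succ_iff_deriv, hd2]
  refine ⟨fun s => (hasDerivAt_bump s).differentiableAt, by simp,
    fun s => (hasDerivAt_bumpPolyDeriv_comp_unitClamp s).differentiableAt, by simp, ?_⟩
  exact contDiff_zero.2 (by unfold bumpPolyDeriv2; fun_prop)

section RadialFunctions

open RealInnerProductSpace

variable {g g' g'' : ℝ → ℝ}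

lemma hasFDerivAt_comp_norm_sq {E : Type*} [NormedAddCommGroup E] [InnerProductSpace ℝ E]
    (hg : ∀ r, HasDerivAt g (g' r) r) (x : E) :
    HasFDerivAt (fun y : E => g (‖y‖ ^ 2)) ((2 * g' (‖x‖ ^ 2)) • innerSL ℝ x) x :=
  ((hg _).comp_hasFDerivAt x (hasStrictFDerivAt_norm_sq x).hasFDerivAt).congr_fderiv
    (by ext v; simp; ring)

lemma iteratedFDeriv_two_comp_norm_sq_apply {E : Type*} [NormedAddCommGroup E]
    [InnerProductSpace ℝ E] (hg : ∀ r, HasDerivAt g (g' r) r)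
    (hg' : ∀ r, HasDerivAt g' (g'' r) r) (x v w : E) :
    iteratedFDeriv ℝ 2 (fun y : E => g (‖y‖ ^ 2)) x ![v, w] =
      2 * g' (‖x‖ ^ 2) * ⟪v, w⟫ + 4 * g'' (‖x‖ ^ 2) * ⟪x, v⟫ * ⟪x, w⟫ := by
  have hfderiv : fderiv ℝ (fun y : E => g (‖y‖ ^ 2)) =
      fun y => (2 * g' (‖y‖ ^ 2)) • innerSL ℝ y :=
    funext fun y => (hasFDerivAt_comp_norm_sq hg y).fderiv
  have hcoeff := (hasFDerivAt_comp_norm_sq hg' x).const_mul 2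
  rw [iteratedFDeriv_two_apply, hfderiv, (hcoeff.fun_smul (innerSL ℝ (E := E)).hasFDerivAt).fderiv]
  simp only [Matrix.cons_val_zero, Matrix.cons_val_one, Matrix.cons_val_fin_one, add_apply,
    smul_apply, ContinuousLinearMap.smulRight_apply, coe_innerSL_apply, smul_eq_mul]
  rw [innerSL_apply_apply, innerSL_apply_apply]
  ring

lemma laplacian_comp_norm_sq {d : ℕ} (hg : ∀ r, HasDerivAt g (g' r) r)
    (hg' : ∀ r, HasDerivAt g' (g'' r) r) (x : EuclideanSpace ℝ (Fin d)) :
    laplacian d (fun y => g (‖y‖ ^ 2)) x =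
      2 * d * g' (‖x‖ ^ 2) + 4 * ‖x‖ ^ 2 * g'' (‖x‖ ^ 2) := by
  calc laplacian d (fun y => g (‖y‖ ^ 2)) x
      = ∑ i, (2 * g' (‖x‖ ^ 2) + 4 * g'' (‖x‖ ^ 2) * x i ^ 2) :=
        Finset.sum_congr rfl fun i _ => by
          simp [iteratedFDeriv_two_comp_norm_sq_apply hg hg', EuclideanSpace.inner_single_right]
          ring
    _ = 2 * d * g' (‖x‖ ^ 2) + 4 * ‖x‖ ^ 2 * g'' (‖x‖ ^ 2) := by
        simp only [Finset.sum_add_distrib, Finset.sum_const, Finset.card_univ, Fintype.card_fin,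
          nsmul_eq_mul, ← Finset.mul_sum, ← EuclideanSpace.real_norm_sq_eq]
        ring

end RadialFunctions

noncomputable def radialBump (d : ℕ) (N : ℝ) (x : EuclideanSpace ℝ (Fin d)) : ℝ :=
  bump ((‖x‖ ^ 2 - N ^ 2) / (2 * N + 1))

section RadialBump

variable {d : ℕ} {N : ℝ}

lemma contDiff_radialBump : ContDiff ℝ 2 (radialBump d N) :=
  contDiff_bump.comp ((contDiff_norm_sq ℝ).sub contDiff_const |>.div_const _)

lemma indicator_ball_le_radialBump (hN : 0 ≤ N) (x : EuclideanSpace ℝ (Fin d)) :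
    (ball 0 N).indicator (fun _ => (1 : ℝ)) x ≤ radialBump d N x := by
  by_cases hx : x ∈ ball 0 N
  · rw [indicator_of_mem hx, radialBump, bump, unitClamp_of_nonpos]
    · simp [bumpPoly]
    rw [mem_ball_zero_iff] at hx
    exact div_nonpos_of_nonpos_of_nonneg (by nlinarith [norm_nonneg x]) (by linarith)
  · rw [indicator_of_notMem hx]
    exact bumpPoly_nonneg (unitClamp_mem_Icc _)

lemma radialBump_le_indicator_ball (hN : 0 ≤ N) (x : EuclideanSpace ℝ (Fin d)) :
    radialBump d N x ≤ (ball 0 (N + 1)).indicator (fun _ => (1 : ℝ)) x := by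
  by_cases hx : x ∈ ball 0 (N + 1)
  · rw [indicator_of_mem hx]
    exact bumpPoly_le_one (unitClamp_mem_Icc _)
  · have hs : 1 ≤ (‖x‖ ^ 2 - N ^ 2) / (2 * N + 1) := by
      rw [mem_ball_zero_iff, not_lt] at hx
      rw [one_le_div (by linarith)]
      nlinarith
    rw [indicator_of_notMem hx, radialBump, bump, unitClamp_of_one_le hs]
    simp [bumpPoly]

lemma abs_laplacian_radialBump_le (hN : 0 ≤ N) (x : EuclideanSpace ℝ (Fin d)) :
    |laplacian d (radialBump d N) x| ≤ (120 * d + 720) * √(radialBump d N x) := by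
  have ha : 0 < 2 * N + 1 := by linarith
  set u := fun r : ℝ => (r - N ^ 2) / (2 * N + 1)
  have hu (r : ℝ) : HasDerivAt u (1 / (2 * N + 1)) r := ((hasDerivAt_id r).sub_const _).div_const _
  have hg (r : ℝ) := (hasDerivAt_bump (u r)).comp r (hu r)
  have hg' (r : ℝ) := ((hasDerivAt_bumpPolyDeriv_comp_unitClamp (u r)).comp r (hu r)).mul_const
    (1 / (2 * N + 1))
  change |laplacian d (fun y => (bump ∘ u) (‖y‖ ^ 2)) x| ≤
    _ * √(bumpPoly (unitClamp (u (‖x‖ ^ 2))))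
  rw [laplacian_comp_norm_sq hg hg']
  set s := u (‖x‖ ^ 2)
  by_cases hs : 1 ≤ s
  · simp only [unitClamp_of_one_le hs, bumpPolyDeriv, bumpPolyDeriv2, sub_self, ne_eq,
      OfNat.ofNat_ne_zero, not_false_eq_true, zero_pow, mul_zero, zero_mul, add_zero, abs_zero]
    positivity
  have hx : ‖x‖ ^ 2 / (2 * N + 1) ^ 2 ≤ 1 := by
    have : ‖x‖ ^ 2 - N ^ 2 < 2 * N + 1 := (div_lt_one ha).1 (not_le.1 hs)
    rw [div_le_one (by positivity)]
    nlinarith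
  have hd : 2 * d / (2 * N + 1) ≤ 2 * d := div_le_self (by positivity) (by linarith)
  have h1 := abs_bumpPolyDeriv_le (unitClamp_mem_Icc s)
  have h2 := abs_bumpPolyDeriv2_le (unitClamp_mem_Icc s)
  calc _ = |2 * d / (2 * N + 1) * bumpPolyDeriv (unitClamp s) +
          4 * (‖x‖ ^ 2 / (2 * N + 1) ^ 2) * bumpPolyDeriv2 (unitClamp s)| := by
        congr 1; field_simp
    _ ≤ 2 * d / (2 * N + 1) * |bumpPolyDeriv (unitClamp s)| +
          4 * (‖x‖ ^ 2 / (2 * N + 1) ^ 2) * |bumpPolyDeriv2 (unitClamp s)| := by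
        refine (abs_add_le _ _).trans_eq ?_
        rw [abs_mul, abs_mul, abs_of_nonneg (div_nonneg (by positivity) ha.le),
          abs_of_nonneg (by positivity : (0 : ℝ) ≤ 4 * (‖x‖ ^ 2 / (2 * N + 1) ^ 2))]
    _ ≤ 2 * d * (60 * √(bumpPoly (unitClamp s))) + 4 * 1 * (180 * √(bumpPoly (unitClamp s))) :=
        by gcongr
    _ = _ := by ring

end RadialBump

theorem stmt0_general (d : ℕ) :
    ∃ κ : ℝ, 0 < κ ∧ ∀ N : ℝ, 1 ≤ N →
      ∃ φ : EuclideanSpace ℝ (Fin d) → ℝ, ContDiff ℝ 2 φ ∧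
        (∀ x, Set.indicator (Metric.ball (0 : EuclideanSpace ℝ (Fin d)) N)
            (fun _ => (1 : ℝ)) x ≤ φ x) ∧
        (∀ x, φ x ≤ Set.indicator (Metric.ball (0 : EuclideanSpace ℝ (Fin d)) (N + 1))
            (fun _ => (1 : ℝ)) x) ∧
        (∀ x, |laplacian d φ x| ≤ κ * Real.sqrt (φ x)) := by
  refine ⟨120 * d + 720, by positivity, fun N hN => ?_⟩
  have hN0 : 0 ≤ N := by linarith
  exact ⟨radialBump d N, contDiff_radialBump, indicator_ball_le_radialBump hN0,
    radialBump_le_indicator_ball hN0, abs_laplacian_radialBump_le hN0⟩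

theorem stmt0 (d : ℕ) (hd : 1 ≤ d) :
    ∃ κ : ℝ, 0 < κ ∧ ∀ N : ℝ, 1 ≤ N →
      ∃ φ : EuclideanSpace ℝ (Fin d) → ℝ, ContDiff ℝ 2 φ ∧
        (∀ x, Set.indicator (Metric.ball (0 : EuclideanSpace ℝ (Fin d)) N)
            (fun _ => (1 : ℝ)) x ≤ φ x) ∧
        (∀ x, φ x ≤ Set.indicator (Metric.ball (0 : EuclideanSpace ℝ (Fin d)) (N + 1))
            (fun _ => (1 : ℝ)) x) ∧
        (∀ x, |laplacian d φ x| ≤ κ * Real.sqrt (φ x)) :=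
  stmt0_general d
end

section
/- For every β ∈ (0,1] there is a constant c(β) such that for all t > 0 and all x, y ∈ ℝ^d, |p_t(x) - p_t(y)| ≤ c(β) · t^{-β/2} · |x-y|^β · (p_{2t}(x) + p_{2t}(y)), where p_t(x) = (2πt)^{-d/2} exp(-|x|²/(2t)) is the Gaussian heat kernel. -/
private lemma exp_sub_exp_le (a b : ℝ) :
    Real.exp (-a) - Real.exp (-b) ≤ (b - a) * Real.exp (-a) := by
  have h := Real.add_one_le_exp (a - b)
  have h2 : Real.exp (-a) * (a - b + 1) ≤ Real.exp (-a) * Real.exp (a - b) :=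
    mul_le_mul_of_nonneg_left h (Real.exp_nonneg _)
  rw [← Real.exp_add] at h2
  have h3 : -a + (a - b) = -b := by ring
  rw [h3] at h2
  nlinarith [Real.exp_nonneg (-a)]

set_option maxHeartbeats 1000000 in
private lemma stmt6_aux (β t A B s D K2 : ℝ) (hβ0 : 0 < β) (hβ1 : β ≤ 1) (ht : 0 < t)
    (hA : 0 ≤ A) (hAB : A ≤ B) (hs : B - A ≤ s) (hs0 : 0 ≤ s)
    (hD : 0 < D) (hK2 : 0 < K2) :
    D * K2 * Real.exp (-A ^ 2 / (2 * t)) - D * K2 * Real.exp (-B ^ 2 / (2 * t)) ≤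
      2 * D * t ^ (-β / 2) * s ^ β *
        (K2 * Real.exp (-A ^ 2 / (4 * t)) + K2 * Real.exp (-B ^ 2 / (4 * t))) := by
  simp only [neg_div]
  rcases eq_or_lt_of_le hs0 with h0 | hspos
  · have hBA : B ≤ A := by rw [← h0] at hs; linarith
    have hABeq : A = B := le_antisymm hAB hBA
    simp [hABeq, ← h0, Real.zero_rpow hβ0.ne']
  set u := Real.sqrt t with hu
  have hu0 : 0 < u := Real.sqrt_pos.mpr ht
  have hu2 : u ^ 2 = t := Real.sq_sqrt ht.le
  set e1 := Real.exp (-(A ^ 2 / (4 * t))) with he1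
  set e2 := Real.exp (-(B ^ 2 / (4 * t))) with he2
  have he1p : 0 < e1 := Real.exp_pos _
  have he2p : 0 < e2 := Real.exp_pos _
  have hE1 : Real.exp (-(A ^ 2 / (2 * t))) = e1 * e1 := by
    rw [he1, ← Real.exp_add]; congr 1; field_simp; ring
  have hE2 : Real.exp (-(B ^ 2 / (2 * t))) = e2 * e2 := by
    rw [he2, ← Real.exp_add]; congr 1; field_simp; ring
  have hP : t ^ (-(β / 2)) * s ^ β = (s / u) ^ β := by
    rw [Real.div_rpow hs0 hu0.le, hu, Real.sqrt_eq_rpow, ← Real.rpow_mul ht.le,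
      show -(β / 2) = -(1 / 2 * β) by ring, Real.rpow_neg ht.le, div_eq_mul_inv]
    ring
  have hPn : (0 : ℝ) ≤ (s / u) ^ β := Real.rpow_nonneg (by positivity) β
  rcases le_or_gt s u with hsu | hsu
  · -- small increment
    have hP1 : s / u ≤ (s / u) ^ β := by
      have h01 : s / u ≤ 1 := (div_le_one hu0).mpr hsu
      have h02 : 0 < s / u := by positivity
      have h03 := Real.rpow_le_rpow_of_exponent_ge h02 h01 hβ1
      rwa [Real.rpow_one] at h03
    have hdiff := exp_sub_exp_le (A ^ 2 / (2 * t)) (B ^ 2 / (2 * t))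
    rw [hE1, hE2] at hdiff
    have hab2 : B ^ 2 - A ^ 2 ≤ (2 * A + s) * s := by
      have p1 : (B - A) * (B + A) ≤ s * (B + A) :=
        mul_le_mul_of_nonneg_right hs (by linarith)
      have p2 : s * (B + A) ≤ s * (2 * A + s) := mul_le_mul_of_nonneg_left (by linarith) hs0
      nlinarith [p1, p2]
    have hq : B ^ 2 / (2 * t) - A ^ 2 / (2 * t) ≤ (2 * A + s) * s / (2 * t) := by
      rw [div_sub_div_same]
      exact div_le_div_of_nonneg_right hab2 (by positivity)
    have hMain : e1 * e1 - e2 * e2 ≤ (2 * A + s) * s / (2 * t) * (e1 * e1) :=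
      hdiff.trans (mul_le_mul_of_nonneg_right hq (by positivity))
    have hMain2 : (e1 * e1 - e2 * e2) * (2 * t) ≤ (2 * A + s) * s * (e1 * e1) := by
      have h5 := mul_le_mul_of_nonneg_right hMain (by positivity : (0:ℝ) ≤ 2 * t)
      have h6 : (2 * A + s) * s / (2 * t) * (e1 * e1) * (2 * t)
          = (2 * A + s) * s * (e1 * e1) := by field_simp
      linarith
    rw [← hu2] at hMain2
    -- Gaussian factor bound
    have hX1 : Real.exp (A ^ 2 / (4 * t)) * e1 = 1 := by
      rw [he1, ← Real.exp_add]; simp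
    have h4t : A ^ 2 + 4 * t ≤ 4 * t * Real.exp (A ^ 2 / (4 * t)) := by
      have h := Real.add_one_le_exp (A ^ 2 / (4 * t))
      have h2 := mul_le_mul_of_nonneg_left h (by positivity : (0:ℝ) ≤ 4 * t)
      have h3 : 4 * t * (A ^ 2 / (4 * t) + 1) = A ^ 2 + 4 * t := by field_simp
      linarith
    have he : e1 * (A ^ 2 + 4 * t) ≤ 4 * t := by
      have h5 := mul_le_mul_of_nonneg_left h4t he1p.le
      have h6 : e1 * (4 * t * Real.exp (A ^ 2 / (4 * t))) = 4 * t := by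
        rw [show e1 * (4 * t * Real.exp (A ^ 2 / (4 * t)))
            = 4 * t * (Real.exp (A ^ 2 / (4 * t)) * e1) from by ring, hX1, mul_one]
      linarith
    have hlin : (2 * A + s) * u ≤ A ^ 2 + 2 * t := by
      have p1 := sq_nonneg (A - u)
      have p2 := mul_le_mul_of_nonneg_right hsu hu0.le
      linarith [p1, p2, hu2]
    have hclaim : (2 * A + s) * u * e1 ≤ 4 * t := by
      have h5 := mul_le_mul_of_nonneg_right hlin he1p.le
      have h6 : (0:ℝ) ≤ 2 * t * e1 := by positivity
      linarith [he, h5, h6]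
    have h7 : (2 * A + s) * e1 ≤ 4 * u := by
      apply le_of_mul_le_mul_right ?_ hu0
      have : 4 * t = 4 * u * u := by rw [← hu2]; ring
      linarith [hclaim, this]
    have h8 : (e1 * e1 - e2 * e2) * u ≤ 2 * s * e1 := by
      apply le_of_mul_le_mul_right ?_ (by positivity : (0:ℝ) < 2 * u)
      have h77 := mul_le_mul_of_nonneg_left h7 (mul_nonneg hs0 he1p.le)
      linarith [hMain2, h77]
    have hsP : s ≤ (s / u) ^ β * u := by
      have h5 := mul_le_mul_of_nonneg_right hP1 hu0.le
      rwa [div_mul_cancel₀ _ hu0.ne'] at h5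
    have h9 : e1 * e1 - e2 * e2 ≤ 2 * ((s / u) ^ β) * e1 := by
      apply le_of_mul_le_mul_right ?_ hu0
      have h5 := mul_le_mul_of_nonneg_right hsP (by positivity : (0:ℝ) ≤ 2 * e1)
      linarith [h8, h5]
    calc D * K2 * Real.exp (-(A ^ 2 / (2 * t))) - D * K2 * Real.exp (-(B ^ 2 / (2 * t)))
        = D * K2 * (e1 * e1) - D * K2 * (e2 * e2) := by rw [hE1, hE2]
      _ ≤ D * K2 * (2 * ((s / u) ^ β) * e1) := by
          linarith [mul_le_mul_of_nonneg_left h9 (mul_pos hD hK2).le]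
      _ ≤ 2 * D * ((s / u) ^ β) * (K2 * e1 + K2 * e2) := by
          have p1 : (0:ℝ) ≤ D * (s / u) ^ β * K2 * e2 :=
            mul_nonneg (mul_nonneg (mul_nonneg hD.le hPn) hK2.le) he2p.le
          linarith [p1]
      _ = 2 * D * t ^ (-(β / 2)) * s ^ β * (K2 * e1 + K2 * e2) := by rw [← hP]; ring
  · -- large increment
    have hP2 : 1 ≤ (s / u) ^ β := by
      have h5 : (1:ℝ) ≤ s / u := (one_le_div hu0).mpr hsu.le
      calc (1:ℝ) = 1 ^ β := (Real.one_rpow β).symm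
        _ ≤ (s / u) ^ β := Real.rpow_le_rpow (by norm_num) h5 hβ0.le
    have he1le : e1 ≤ 1 := by
      rw [he1]
      calc Real.exp (-(A ^ 2 / (4 * t))) ≤ Real.exp 0 :=
            Real.exp_le_exp.mpr (neg_nonpos.mpr (by positivity))
        _ = 1 := Real.exp_zero
    calc D * K2 * Real.exp (-(A ^ 2 / (2 * t))) - D * K2 * Real.exp (-(B ^ 2 / (2 * t)))
        = D * K2 * (e1 * e1) - D * K2 * (e2 * e2) := by rw [hE1, hE2]
      _ ≤ 2 * D * ((s / u) ^ β) * (K2 * e1 + K2 * e2) := by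
          have hesq : e1 * e1 ≤ e1 := by
            calc e1 * e1 ≤ 1 * e1 := mul_le_mul_of_nonneg_right he1le he1p.le
              _ = e1 := one_mul e1
          have t1 : D * K2 * (e1 * e1) ≤ D * K2 * e1 :=
            mul_le_mul_of_nonneg_left hesq (mul_pos hD hK2).le
          have t2 : D * K2 * e1 ≤ 2 * D * ((s / u) ^ β) * (K2 * e1) := by
            have h5 : (1:ℝ) * (D * K2 * e1) ≤ (2 * (s / u) ^ β) * (D * K2 * e1) :=
              mul_le_mul_of_nonneg_right (by linarith) (by positivity)
            linarith [h5]
          have t3 : (0:ℝ) ≤ 2 * D * ((s / u) ^ β) * (K2 * e2) := by positivity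
          have t4 : (0:ℝ) ≤ D * K2 * (e2 * e2) := by positivity
          linarith [t1, t2, t3, t4]
      _ = 2 * D * t ^ (-(β / 2)) * s ^ β * (K2 * e1 + K2 * e2) := by rw [← hP]; ring

theorem stmt6 (d : ℕ) (p : ℝ → EuclideanSpace ℝ (Fin d) → ℝ)
    (hp : ∀ t x, p t x = (2 * Real.pi * t) ^ (-(d : ℝ) / 2) * Real.exp (-‖x‖ ^ 2 / (2 * t))) :
    ∀ β : ℝ, 0 < β → β ≤ 1 → ∃ c : ℝ, 0 < c ∧
      ∀ t : ℝ, 0 < t → ∀ x y : EuclideanSpace ℝ (Fin d),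
        |p t x - p t y| ≤ c * t ^ (-β / 2) * ‖x - y‖ ^ β * (p (2 * t) x + p (2 * t) y) := by
  intro β hβ0 hβ1
  refine ⟨2 * 2 ^ ((d : ℝ) / 2), by positivity, ?_⟩
  intro t ht x y
  simp only [hp]
  rw [show (2:ℝ) * (2 * t) = 4 * t from by ring]
  have hK : (2 * Real.pi * t) ^ (-(d : ℝ) / 2)
      = 2 ^ ((d : ℝ) / 2) * (2 * Real.pi * (2 * t)) ^ (-(d : ℝ) / 2) := by
    have h1 : 2 * Real.pi * (2 * t) = 2 * (2 * Real.pi * t) := by ring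
    rw [h1, Real.mul_rpow (by norm_num : (0:ℝ) ≤ 2) (by positivity : (0:ℝ) ≤ 2 * Real.pi * t),
      ← mul_assoc, ← Real.rpow_add (by norm_num : (0:ℝ) < 2),
      show (d:ℝ) / 2 + -(d:ℝ) / 2 = 0 by ring, Real.rpow_zero, one_mul]
  rw [hK]
  have hK2 : (0:ℝ) < (2 * Real.pi * (2 * t)) ^ (-(d : ℝ) / 2) := by positivity
  have hD : (0:ℝ) < 2 ^ ((d : ℝ) / 2) := by positivity
  rw [abs_sub_le_iff]
  rcases le_total ‖x‖ ‖y‖ with h | h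
  · constructor
    · have hns : ‖y‖ - ‖x‖ ≤ ‖x - y‖ := by
        have := norm_sub_norm_le y x
        rwa [norm_sub_rev] at this
      exact stmt6_aux β t ‖x‖ ‖y‖ ‖x - y‖ _ _ hβ0 hβ1 ht (norm_nonneg x) h hns
        (norm_nonneg _) hD hK2
    · have hxy2 : ‖x‖ ^ 2 ≤ ‖y‖ ^ 2 := pow_le_pow_left₀ (norm_nonneg x) h 2
      have hmono : Real.exp (-‖y‖ ^ 2 / (2 * t)) ≤ Real.exp (-‖x‖ ^ 2 / (2 * t)) :=
        Real.exp_le_exp.mpr ((div_le_div_iff_of_pos_right (by positivity)).mpr (by linarith))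
      have hR : (0:ℝ) ≤ 2 * 2 ^ ((d : ℝ) / 2) * t ^ (-β / 2) * ‖x - y‖ ^ β *
          ((2 * Real.pi * (2 * t)) ^ (-(d : ℝ) / 2) * Real.exp (-‖x‖ ^ 2 / (4 * t)) +
            (2 * Real.pi * (2 * t)) ^ (-(d : ℝ) / 2) * Real.exp (-‖y‖ ^ 2 / (4 * t))) := by
        positivity
      linarith [hR, mul_le_mul_of_nonneg_left hmono (mul_pos hD hK2).le]
  · constructor
    · have hxy2 : ‖y‖ ^ 2 ≤ ‖x‖ ^ 2 := pow_le_pow_left₀ (norm_nonneg y) h 2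
      have hmono : Real.exp (-‖x‖ ^ 2 / (2 * t)) ≤ Real.exp (-‖y‖ ^ 2 / (2 * t)) :=
        Real.exp_le_exp.mpr ((div_le_div_iff_of_pos_right (by positivity)).mpr (by linarith))
      have hR : (0:ℝ) ≤ 2 * 2 ^ ((d : ℝ) / 2) * t ^ (-β / 2) * ‖x - y‖ ^ β *
          ((2 * Real.pi * (2 * t)) ^ (-(d : ℝ) / 2) * Real.exp (-‖x‖ ^ 2 / (4 * t)) +
            (2 * Real.pi * (2 * t)) ^ (-(d : ℝ) / 2) * Real.exp (-‖y‖ ^ 2 / (4 * t))) := by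
        positivity
      linarith [hR, mul_le_mul_of_nonneg_left hmono (mul_pos hD hK2).le]
    · have haux := stmt6_aux β t ‖y‖ ‖x‖ ‖x - y‖ (2 ^ ((d : ℝ) / 2))
        ((2 * Real.pi * (2 * t)) ^ (-(d : ℝ) / 2)) hβ0 hβ1 ht (norm_nonneg y) h
        (norm_sub_norm_le x y) (norm_nonneg _) hD hK2
      exact haux.trans (le_of_eq (by ring))
end

section
/- Let X₁, …, X_n be points in ℝ^d (n ≥ 1), let h : (0,∞) → [0,∞) be nonincreasing, let H ≥ 0, and let ε > 0. Then for every x ∈ ℝ^d there exists an index j ∈ {1,…,n} such that Σ_{i=1}^n 1_{|x - X_i| ≤ ε} · min(h(|x - X_i|), H) ≤ H + Σ_{i ≠ j} 1_{|X_i - X_j| ≤ 2ε} · min(h(|X_i - X_j|/2), H), where in the sums h(0) is interpreted as +∞ (so min(h(0),H) = H). -/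
/-!
Let `X j` be a sample point nearest to `x`. By the triangle inequality
`|X i - X j| ≤ |X i - x| + |x - X j| ≤ 2 |x - X i|`, and the truncated kernel
`r ↦ 1_{r ≤ ε} min (h r) H` is nonincreasing on `[0, ∞)`, so the `i`-th term at `x` is at most the
`i`-th term at `X j` with halved distance. The remaining term `i = j` is at most `H`.
-/

open Finset

/-- The kernel `1_{r ≤ ε} · min (h r) H`, with `h 0` read as `+∞`. -/
noncomputable def cutoffKernel (h : ℝ → ℝ) (H ε r : ℝ) : ℝ :=
  if r ≤ ε then (if r = 0 then H else min (h r) H) else 0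

section cutoffKernel

variable {h : ℝ → ℝ} {H ε : ℝ}

lemma cutoffKernel_le (hH : 0 ≤ H) (r : ℝ) : cutoffKernel h H ε r ≤ H := by
  unfold cutoffKernel
  split_ifs
  exacts [le_rfl, min_le_right _ _, hH]

lemma cutoffKernel_nonneg (hpos : ∀ r, 0 < r → 0 ≤ h r) (hH : 0 ≤ H) {r : ℝ} (hr : 0 ≤ r) :
    0 ≤ cutoffKernel h H ε r := by
  unfold cutoffKernel
  split_ifs with _ hr0
  exacts [hH, le_min (hpos r (hr.lt_of_ne' hr0)) hH, le_rfl]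

lemma cutoffKernel_antitoneOn (hmono : AntitoneOn h (Set.Ioi 0)) (hpos : ∀ r, 0 < r → 0 ≤ h r)
    (hH : 0 ≤ H) : AntitoneOn (cutoffKernel h H ε) (Set.Ici 0) := by
  intro s hs t _ hst
  by_cases htε : t ≤ ε
  · by_cases hs0 : s = 0
    · simpa [cutoffKernel, hs0, (hs0 ▸ hst : (0 : ℝ) ≤ t).trans htε] using cutoffKernel_le hH t
    · have hs_pos : 0 < s := (Set.mem_Ici.mp hs).lt_of_ne' hs0
      have ht_pos : 0 < t := hs_pos.trans_le hst
      simp only [cutoffKernel, htε, hst.trans htε, hs0, ht_pos.ne', if_true, if_false]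
      exact min_le_min_right H (hmono hs_pos ht_pos hst)
  · simpa [cutoffKernel, htε] using cutoffKernel_nonneg hpos hH hs

lemma cutoffKernel_comp_half (r : ℝ) :
    cutoffKernel (fun r => h (r / 2)) H (2 * ε) r = cutoffKernel h H ε (r / 2) := by
  have hle : r ≤ 2 * ε ↔ r / 2 ≤ ε := by rw [div_le_iff₀ two_pos, mul_comm]
  simp only [cutoffKernel, hle, div_eq_zero_iff, two_ne_zero, or_false]

end cutoffKernel

lemma dist_le_two_mul_dist_of_dist_le {E : Type*} [PseudoMetricSpace E] {x a b : E}
    (hb : dist x b ≤ dist x a) : dist a b ≤ 2 * dist x a := by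
  linarith [dist_triangle_left a b x]

lemma sum_le_add_sum_erase_of_nearest {E ι : Type*} [PseudoMetricSpace E] [Fintype ι]
    [DecidableEq ι] {K : ℝ → ℝ} {H : ℝ} (hK : AntitoneOn K (Set.Ici 0)) (hKH : ∀ r, K r ≤ H)
    (X : ι → E) (x : E) {j : ι} (hj : ∀ i, dist x (X j) ≤ dist x (X i)) :
    ∑ i, K (dist x (X i)) ≤ H + ∑ i ∈ univ.erase j, K (dist (X i) (X j) / 2) := by
  rw [← sum_erase_add _ _ (mem_univ j), add_comm]
  refine add_le_add (hKH _) (sum_le_sum fun i _ => hK ?_ ?_ ?_)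
  · exact div_nonneg dist_nonneg zero_le_two
  · exact dist_nonneg
  · linarith [dist_le_two_mul_dist_of_dist_le (hj i)]

theorem stmt14_general (d n : ℕ) (hn : 1 ≤ n) (X : Fin n → EuclideanSpace ℝ (Fin d))
    (h : ℝ → ℝ) (hmono : AntitoneOn h (Set.Ioi 0)) (hpos : ∀ r : ℝ, 0 < r → 0 ≤ h r)
    (H : ℝ) (hH : 0 ≤ H) (ε : ℝ) (x : EuclideanSpace ℝ (Fin d)) :
    ∃ j : Fin n,
      (∑ i : Fin n, if ‖x - X i‖ ≤ ε then
          (if ‖x - X i‖ = 0 then H else min (h ‖x - X i‖) H) else 0)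
        ≤ H + ∑ i ∈ Finset.univ.erase j,
            (if ‖X i - X j‖ ≤ 2 * ε then
              (if ‖X i - X j‖ = 0 then H else min (h (‖X i - X j‖ / 2)) H) else 0) := by
  obtain ⟨j, -, hj⟩ :=
    exists_min_image univ (fun i => dist x (X i)) ⟨⟨0, hn⟩, mem_univ _⟩
  refine ⟨j, ?_⟩
  have key := sum_le_add_sum_erase_of_nearest (cutoffKernel_antitoneOn (ε := ε) hmono hpos hH)
    (cutoffKernel_le hH) X x (fun i => hj i (mem_univ i))
  simp only [dist_eq_norm, ← cutoffKernel_comp_half] at key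
  exact key

theorem stmt14 (d n : ℕ) (hn : 1 ≤ n) (X : Fin n → EuclideanSpace ℝ (Fin d))
    (h : ℝ → ℝ) (hmono : AntitoneOn h (Set.Ioi 0)) (hpos : ∀ r : ℝ, 0 < r → 0 ≤ h r)
    (H : ℝ) (hH : 0 ≤ H) (ε : ℝ) (hε : 0 < ε) (x : EuclideanSpace ℝ (Fin d)) :
    ∃ j : Fin n,
      (∑ i : Fin n, if ‖x - X i‖ ≤ ε then
          (if ‖x - X i‖ = 0 then H else min (h ‖x - X i‖) H) else 0)
        ≤ H + ∑ i ∈ Finset.univ.erase j,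
            (if ‖X i - X j‖ ≤ 2 * ε then
              (if ‖X i - X j‖ = 0 then H else min (h (‖X i - X j‖ / 2)) H) else 0) :=
  stmt14_general d n hn X h hmono hpos H hH ε x
end
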